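/- In knapsack Instance 2, the string x_max with x_1 = x_2 = 1 and all other bits 0 is feasible with objective value 2n, and it is the unique feasible solution achieving the maximum objective value. -/
import Mathlib


open Finset

/-- Value of item `i` in knapsack Instance 2. -/
noncomputable def v2 (n : ℕ) (i : ℕ) : ℝ :=
  if i ≤ 2 then n else if i ≤ n / 4 then n + 2 else (n : ℝ) ^ (-3 : ℤ)

/-- Weight of item `i` in knapsack Instance 2. -/
noncomputable def w2 (n : ℕ) (i : ℕ) : ℝ :=
  if i ≤ 2 then n
  else if i ≤ n / 4 then n + 1
  else if i ≤ n / 2 then (n : ℝ) ^ (-4 : ℤ)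
  else 1 / (4 * (1 + (n : ℝ) ^ (-4 : ℤ)))

/-- Objective value of a knapsack `x` in Instance 2. -/
noncomputable def f2 (n : ℕ) (x : Finset ℕ) : ℝ := ∑ i ∈ x, v2 n i

/-- Total weight of a knapsack `x` in Instance 2. -/
noncomputable def wt2 (n : ℕ) (x : Finset ℕ) : ℝ := ∑ i ∈ x, w2 n i

/-- Feasibility in Instance 2: total weight at most the capacity `W = 2n`. -/
def feasible2 (n : ℕ) (x : Finset ℕ) : Prop := wt2 n x ≤ 2 * n

lemma w2_pos {n : ℕ} (hn : 1 ≤ n) (i : ℕ) : 0 < w2 n i := by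
  have h : (0:ℝ) < n := by exact_mod_cast hn
  unfold w2
  split_ifs <;> positivity

lemma w2_ge {n : ℕ} (hn : 1 ≤ n) {i : ℕ} (hi : i ≤ n / 4) : (n : ℝ) ≤ w2 n i := by
  unfold w2
  split_ifs with h1 h2 h3 <;> first | rfl | linarith | exact absurd hi (by omega)

lemma v2_le {n : ℕ} (hn : 1 ≤ n) (i : ℕ) : v2 n i ≤ (n : ℝ) + 2 := by
  have h : (1:ℝ) ≤ n := by exact_mod_cast hn
  unfold v2
  split_ifs with h1 h2
  · linarith
  · rfl
  · have : (n : ℝ) ^ (-3 : ℤ) ≤ 1 := by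
      rw [show (-3 : ℤ) = -(3:ℕ) by norm_num, zpow_neg, zpow_natCast]
      rw [inv_le_one_iff₀]
      right; exact one_le_pow₀ h
    linarith

/-- In knapsack Instance 2, `x_max = {1,2}` is feasible with objective value `2n`,
and it is the unique feasible solution achieving the maximum objective value. -/
theorem stmt10 (n : ℕ) (h4 : 4 ∣ n) (hn : 16 ≤ n) :
    feasible2 n {1, 2} ∧ f2 n {1, 2} = 2 * n ∧
      ∀ x : Finset ℕ, x ⊆ Finset.Icc 1 n → feasible2 n x → x ≠ {1, 2} →
        f2 n x < f2 n {1, 2} := by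
  have hn1 : 1 ≤ n := by omega
  have hnR : (16:ℝ) ≤ n := by exact_mod_cast hn
  have hq : 4 ≤ n / 4 := by omega
  have hwt : wt2 n ({1,2} : Finset ℕ) = 2 * n := by
    rw [wt2, Finset.sum_pair (by norm_num : (1:ℕ) ≠ 2)]
    simp [w2]; ring
  have hf : f2 n ({1,2} : Finset ℕ) = 2 * n := by
    rw [f2, Finset.sum_pair (by norm_num : (1:ℕ) ≠ 2)]
    simp [v2]; ring
  refine ⟨le_of_eq hwt, hf, ?_⟩
  intro x hsub hfeas hne
  rw [hf]
  set B := x.filter (fun i => i ≤ n / 4) with hB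
  set S := x.filter (fun i => ¬ i ≤ n / 4) with hS
  have hwsplit : wt2 n B + wt2 n S = wt2 n x := by
    rw [wt2, wt2, wt2]
    exact Finset.sum_filter_add_sum_filter_not x _ _
  have hSnn : 0 ≤ wt2 n S :=
    Finset.sum_nonneg fun i _ => (w2_pos hn1 i).le
  have hBx : B ⊆ x := Finset.filter_subset _ _
  have hfeas' : wt2 n x ≤ 2 * n := hfeas
  -- card B ≤ 2
  rcases lt_or_ge B.card 2 with hcard | hcard
  · -- at most one big item
    have hfsplit : f2 n B + f2 n S = f2 n x := by
      rw [f2, f2, f2]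
      exact Finset.sum_filter_add_sum_filter_not x _ _
    have hfB : f2 n B ≤ (n : ℝ) + 2 := by
      have h1 : f2 n B ≤ B.card • ((n:ℝ) + 2) :=
        Finset.sum_le_card_nsmul B _ _ (fun i _ => v2_le hn1 i)
      have h2 : (B.card : ℝ) * ((n:ℝ) + 2) ≤ 1 * ((n:ℝ) + 2) := by
        apply mul_le_mul_of_nonneg_right _ (by linarith)
        exact_mod_cast Nat.lt_succ_iff.mp hcard
      rw [nsmul_eq_mul] at h1
      linarith
    have hfS : f2 n S ≤ (n : ℝ) * (n : ℝ) ^ (-3 : ℤ) := by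
      have heach : ∀ i ∈ S, v2 n i ≤ (n : ℝ) ^ (-3 : ℤ) := by
        intro i hi
        have hi' : ¬ i ≤ n / 4 := (Finset.mem_filter.mp hi).2
        have : v2 n i = (n : ℝ) ^ (-3 : ℤ) := by
          rw [v2, if_neg (by omega), if_neg hi']
        exact this.le
      have h1 : f2 n S ≤ S.card • ((n:ℝ) ^ (-3:ℤ)) :=
        Finset.sum_le_card_nsmul S _ _ heach
      have hcS : S.card ≤ n := by
        have hSx : S ⊆ x := Finset.filter_subset _ _
        have := Finset.card_le_card (hSx.trans hsub)
        simpa [Nat.card_Icc] using this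
      have hz : (0:ℝ) ≤ (n:ℝ) ^ (-3:ℤ) := by positivity
      have h2 : (S.card : ℝ) * ((n:ℝ)^(-3:ℤ)) ≤ (n:ℝ) * ((n:ℝ)^(-3:ℤ)) := by
        apply mul_le_mul_of_nonneg_right _ hz
        exact_mod_cast hcS
      rw [nsmul_eq_mul] at h1
      linarith
    have hsmall : (n : ℝ) * (n : ℝ) ^ (-3 : ℤ) ≤ 1 := by
      rw [show (-3 : ℤ) = -(3:ℕ) by norm_num, zpow_neg, zpow_natCast]
      rw [← div_eq_mul_inv, div_le_one (by positivity)]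
      exact le_self_pow₀ (by linarith) (by norm_num)
    linarith
  · -- at least 2 big items
    exfalso
    rcases lt_or_ge 2 B.card with hc3 | hc2
    · -- ≥ 3 big items: weight ≥ 3n
      have h1 : (B.card : ℝ) * (n : ℝ) ≤ wt2 n B := by
        have := Finset.card_nsmul_le_sum B (w2 n) (n : ℝ)
          (fun i hi => w2_ge hn1 (Finset.mem_filter.mp hi).2)
        rw [nsmul_eq_mul] at this
        exact this
      have h2 : (3:ℝ) ≤ (B.card : ℝ) := by exact_mod_cast hc3
      nlinarith
    · have hc2' : B.card = 2 := le_antisymm hc2 hcard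
      by_cases hBeq : B = ({1,2} : Finset ℕ)
      · -- x strictly contains {1,2}
        have hss : ({1,2} : Finset ℕ) ⊂ x := by
          rw [← hBeq]
          refine Finset.ssubset_iff_subset_ne.mpr ⟨hBx, ?_⟩
          intro h; exact hne (by rw [← h, hBeq])
        obtain ⟨j, hjx, hjB⟩ := Finset.exists_of_ssubset hss
        rw [← hBeq] at hjB
        have hjS : j ∈ S := by
          rw [hS, Finset.mem_filter]
          refine ⟨hjx, fun hjle => hjB ?_⟩
          rw [hB, Finset.mem_filter]; exact ⟨hjx, hjle⟩
        have hSpos : 0 < wt2 n S := by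
          rw [wt2]
          exact Finset.sum_pos' (fun i _ => (w2_pos hn1 i).le)
            ⟨j, hjS, w2_pos hn1 j⟩
        have hwB : wt2 n B = 2 * n := by rw [hBeq]; exact hwt
        linarith
      · -- B has an element i ∉ {1,2}, so w2 i = n+1
        obtain ⟨i, hiB, hi12⟩ : ∃ i ∈ B, i ∉ ({1,2} : Finset ℕ) := by
          by_contra h
          push_neg at h
          exact hBeq (Finset.eq_of_subset_of_card_le h (by simp [hc2']))
        obtain ⟨j, hjB, hji⟩ := Finset.exists_mem_ne (by omega : 1 < B.card) i
        have hi1 : 1 ≤ i := by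
          have : i ∈ Finset.Icc 1 n := hsub (hBx hiB)
          exact (Finset.mem_Icc.mp this).1
        have hi3 : 3 ≤ i := by
          simp only [Finset.mem_insert, Finset.mem_singleton] at hi12
          omega
        have hiq : i ≤ n / 4 := (Finset.mem_filter.mp hiB).2
        have hwi : w2 n i = (n : ℝ) + 1 := by
          rw [w2, if_neg (by omega), if_pos hiq]
        have hwj : (n : ℝ) ≤ w2 n j := w2_ge hn1 (Finset.mem_filter.mp hjB).2
        have hpair : w2 n i + w2 n j ≤ wt2 n B := by
          have hsub2 : ({i, j} : Finset ℕ) ⊆ B := by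
            intro k hk
            simp only [Finset.mem_insert, Finset.mem_singleton] at hk
            rcases hk with rfl | rfl
            · exact hiB
            · exact hjB
          have := Finset.sum_le_sum_of_subset_of_nonneg hsub2
            (fun k _ _ => (w2_pos hn1 k).le)
          rwa [Finset.sum_pair (Ne.symm hji)] at this
        linarith
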